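/- arXiv:1702.08011 — 2 statements merged into one kernel-verified Lean document; each statement's English description precedes it below -/
import Mathlib

section
/- In the quasi-shuffle Hopf algebra of words over a commutative monoid B (with deconcatenation coproduct and counit ε(α)=δ_{α,∅}), the linear map S defined by S(α) = (−1)^{ℓ(α)} Σ_{J ⊨ ℓ(α)} J∘(α^r) is an antipode, i.e., Σ S(α_{(1)})·α_{(2)} = ε(α)·1 for all words α; here α^r is the reversal of α, J∘β for a composition J=(j₁,…,j_l) of ℓ(β) sums consecutive blocks of β of sizes j₁,…,j_l, and the sum is over all compositions J of ℓ(α). -/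
/-!
Put `γ = (α.take i).reverse` and `α.drop i = b :: δ`. A term of the quasi-shuffle `J∘γ * (b :: δ)`
begins with the first letter of `J∘γ`, with `b`, or with `b` plus that letter; the last two kinds
are exactly the terms of `J'∘(b :: γ) * δ` beginning with the first letter of `J'∘(b :: γ)`, where
`J'` runs over the compositions of `i + 1` (`b` as a block of its own, or merged into the first
block of `J`). So the `i`-th summand is `(-1)^i (Y i + Y (i + 1))`, with `Y i` the part of
`∑_J J∘γ * α.drop i` led by `J∘γ`; the sum telescopes, `Y 0 = 0`, and the last summand cancels
`Y (ℓ α)` since `α.drop (ℓ α)` is empty.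
-/

/-- The quasi-shuffle product of two words over a commutative monoid `B`,
valued in the free `k`-module on words:
`∅*α = α*∅ = α` and `(a,α)*(b,β) = (a, α*(b,β)) + (b, (a,α)*β) + (a+b, α*β)`. -/
noncomputable def qs (k : Type*) [CommRing k] {B : Type*} [AddCommMonoid B] :
    List B → List B → (List B →₀ k)
  | [], β => Finsupp.single β 1
  | α, [] => Finsupp.single α 1
  | a :: α, b :: β =>
      Finsupp.mapDomain (List.cons a) (qs k α (b :: β)) +
      Finsupp.mapDomain (List.cons b) (qs k (a :: α) β) +
      Finsupp.mapDomain (List.cons (a + b)) (qs k α β)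
  termination_by α β => α.length + β.length

/-- The bilinear extension of the quasi-shuffle product to the free module. -/
noncomputable def qsMul {k : Type*} [CommRing k] {B : Type*} [AddCommMonoid B]
    (f g : List B →₀ k) : List B →₀ k :=
  f.sum fun α c => g.sum fun β d => (c * d) • qs k α β

/-- The antipode formula: `S(α) = (−1)^{ℓ(α)} ∑_{J ⊨ ℓ(α)} J∘(α^r)`, where the
sum ranges over all compositions `J` of the length of `α`, `α^r` is the
reversal of `α`, and `J∘β` sums consecutive blocks of `β` of sizes given
by the parts of `J`. -/
noncomputable def qsAntipode (k : Type*) [CommRing k] {B : Type*} [AddCommMonoid B]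
    (α : List B) : List B →₀ k :=
  (-1 : k) ^ α.length •
    ∑ J : Composition α.length,
      Finsupp.single ((α.reverse.splitWrtComposition J).map List.sum) 1

namespace Composition

variable {n : ℕ}

def consOne (c : Composition n) : Composition (n + 1) where
  blocks := 1 :: c.blocks
  blocks_pos := by
    rintro i (_ | ⟨_, hi⟩)
    exacts [one_pos, c.blocks_pos hi]
  blocks_sum := by simp [c.blocks_sum, add_comm]

def succHead (c : Composition n) : Composition (n + 1) where
  blocks := (c.blocks.headI + 1) :: c.blocks.tail
  blocks_pos := by
    rintro i (_ | ⟨_, hi⟩)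
    exacts [Nat.succ_pos _, c.blocks_pos (List.mem_of_mem_tail hi)]
  blocks_sum := by
    have := List.headI_add_tail_sum c.blocks
    rw [List.sum_cons, c.blocks_sum] at *
    omega

lemma exists_blocks_eq_cons (hn : 0 < n) (c : Composition n) : ∃ j t, c.blocks = j :: t := by
  match hb : c.blocks with
  | [] => simpa [Composition.length, hb] using c.length_pos_of_pos hn
  | j :: t => exact ⟨j, t, rfl⟩

lemma bijective_sumElim_consOne_succHead (hn : 0 < n) :
    Function.Bijective (Sum.elim consOne succHead : Composition n ⊕ Composition n → _) := by
  constructor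
  · have head_tail (c : Composition n) :
        ∃ j t, 0 < j ∧ c.blocks = j :: t ∧ c.blocks.headI = j ∧ c.blocks.tail = t := by
      obtain ⟨j, t, hc⟩ := exists_blocks_eq_cons hn c
      exact ⟨j, t, c.blocks_pos (hc ▸ List.mem_cons_self), hc, by simp [hc], by simp [hc]⟩
    rintro (c | c) (d | d) h <;>
      simp only [Sum.elim_inl, Sum.elim_inr, Composition.ext_iff, consOne, succHead,
        List.cons.injEq] at h
    · exact congrArg _ (Composition.ext h.2)
    · obtain ⟨j, t, hj, -, hd, -⟩ := head_tail d
      omega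
    · obtain ⟨j, t, hj, -, hc, -⟩ := head_tail c
      omega
    · obtain ⟨j, t, -, hc, hcj, hct⟩ := head_tail c
      obtain ⟨j', t', -, hd, hdj, hdt⟩ := head_tail d
      refine congrArg _ (Composition.ext ?_)
      rw [hc, hd]
      grind
  · intro c
    obtain ⟨j, t, hc⟩ := exists_blocks_eq_cons n.succ_pos c
    have hj : 0 < j := c.blocks_pos (hc ▸ List.mem_cons_self)
    have ht {i} (hi : i ∈ t) : 0 < i := c.blocks_pos (hc ▸ List.mem_cons_of_mem _ hi)
    have hsum : j + t.sum = n + 1 := by simpa [hc] using c.blocks_sum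
    rcases Nat.lt_or_ge 1 j with hj1 | hj1
    · refine ⟨.inr ⟨(j - 1) :: t, ?_, by simp; omega⟩, Composition.ext ?_⟩
      · rintro i (_ | ⟨_, hi⟩)
        exacts [by omega, ht hi]
      · simp [succHead, hc]
        omega
    · obtain rfl : j = 1 := by omega
      exact ⟨.inl ⟨t, ht, by omega⟩, Composition.ext (by simp [consOne, hc])⟩

lemma sum_succ {M : Type*} [AddCommMonoid M] (hn : 0 < n) (f : Composition (n + 1) → M) :
    ∑ c, f c = ∑ c : Composition n, f c.consOne + ∑ c : Composition n, f c.succHead := by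
  rw [← (Equiv.ofBijective _ (bijective_sumElim_consOne_succHead hn)).sum_comp,
    Fintype.sum_sum_type]
  rfl

lemma sum_of_le_one {M : Type*} [AddCommMonoid M] (hn : n ≤ 1) (f : Composition n → M) :
    ∑ c, f c = f (ones n) := by
  have : Subsingleton (Composition n) := Fintype.card_le_one_iff_subsingleton.mp <| by
    rw [composition_card, Nat.sub_eq_zero_of_le hn, pow_zero]
  exact Fintype.sum_subsingleton f _

end Composition

section Words

variable {B : Type*} [AddCommMonoid B] {m : ℕ}

/-- `blockSums γ J` is `J∘γ`: the sums of the consecutive blocks of `γ` of the sizes in `J`. -/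
def blockSums (γ : List B) (J : Composition m) : List B :=
  (γ.splitWrtComposition J).map List.sum

lemma blockSums_ne_nil (hm : 0 < m) (γ : List B) (J : Composition m) : blockSums γ J ≠ [] := by
  rw [← List.length_pos_iff, blockSums, List.length_map, List.length_splitWrtComposition]
  exact J.length_pos_of_pos hm

@[simp] lemma blockSums_ones_zero (γ : List B) : blockSums γ (Composition.ones 0) = [] := rfl

@[simp] lemma blockSums_ones_one (b : B) (γ : List B) :
    blockSums (b :: γ) (Composition.ones 1) = [b] := by
  simp [blockSums, List.splitWrtComposition, List.splitWrtCompositionAux]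

@[simp] lemma blockSums_consOne (b : B) (γ : List B) (J : Composition m) :
    blockSums (b :: γ) J.consOne = b :: blockSums γ J := by
  simp [blockSums, List.splitWrtComposition, Composition.consOne, List.splitWrtCompositionAux]

lemma blockSums_succHead (hm : 0 < m) (b : B) (γ : List B) (J : Composition m) :
    blockSums (b :: γ) J.succHead = (blockSums γ J).modifyHead (b + ·) := by
  obtain ⟨j, t, hJ⟩ := J.exists_blocks_eq_cons hm
  simp [blockSums, List.splitWrtComposition, Composition.succHead, hJ,
    List.splitWrtCompositionAux]

lemma sum_blockSums_cons {M : Type*} [AddCommMonoid M] (hm : 0 < m) (f : List B → M) (b : B)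
    (γ : List B) :
    ∑ J : Composition (m + 1), f (blockSums (b :: γ) J)
      = ∑ J : Composition m, f (b :: blockSums γ J)
        + ∑ J : Composition m, f ((blockSums γ J).modifyHead (b + ·)) := by
  simp only [Composition.sum_succ hm, blockSums_consOne, blockSums_succHead hm]

end Words

section QuasiShuffle

variable (k : Type*) [CommRing k] {B : Type*} [AddCommMonoid B]

/-- The terms of `qs k w δ` whose first letter is the first letter of `w`. -/
noncomputable def qsLeading : List B → List B → (List B →₀ k)
  | [], _ => 0
  | c :: w, δ => Finsupp.mapDomain (List.cons c) (qs k w δ)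

lemma qs_nil_left (δ : List B) : qs k [] δ = Finsupp.single δ 1 := by
  cases δ <;> rw [qs]

lemma qs_nil_right (w : List B) : qs k w [] = Finsupp.single w 1 := by
  cases w <;> simp [qs]

lemma qs_nil_right_of_ne_nil {w : List B} (hw : w ≠ []) : qs k w [] = qsLeading k w [] := by
  obtain ⟨c, w, rfl⟩ := List.exists_cons_of_ne_nil hw
  simp [qsLeading, qs_nil_right]

lemma qs_cons_right (w : List B) (b : B) (δ : List B) :
    qs k w (b :: δ)
      = qsLeading k w (b :: δ) + qsLeading k (b :: w) δ + qsLeading k (w.modifyHead (b + ·)) δ := by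
  cases w with
  | nil => simp [qsLeading, qs_nil_left]
  | cons c w => rw [qs]; simp [qsLeading, add_comm b c]

end QuasiShuffle

section BlockQuasiShuffle

variable (k : Type*) [CommRing k] {B : Type*} [AddCommMonoid B]

noncomputable def blockQs (m : ℕ) (γ δ : List B) : List B →₀ k :=
  ∑ J : Composition m, qs k (blockSums γ J) δ

noncomputable def blockQsLeading (m : ℕ) (γ δ : List B) : List B →₀ k :=
  ∑ J : Composition m, qsLeading k (blockSums γ J) δ

lemma blockQs_zero (γ δ : List B) : blockQs k 0 γ δ = Finsupp.single δ 1 := by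
  simp [blockQs, Composition.sum_of_le_one zero_le_one, qs_nil_left]

lemma blockQsLeading_zero (γ δ : List B) : blockQsLeading k 0 γ δ = 0 := by
  simp [blockQsLeading, Composition.sum_of_le_one zero_le_one, qsLeading]

lemma blockQs_nil_right {m : ℕ} (hm : 0 < m) (γ : List B) :
    blockQs k m γ [] = blockQsLeading k m γ [] :=
  Finset.sum_congr rfl fun J _ => qs_nil_right_of_ne_nil k (blockSums_ne_nil hm γ J)

lemma blockQs_cons_right (m : ℕ) (γ : List B) (b : B) (δ : List B) :
    blockQs k m γ (b :: δ)
      = blockQsLeading k m γ (b :: δ) + blockQsLeading k (m + 1) (b :: γ) δ := by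
  rcases Nat.eq_zero_or_pos m with rfl | hm
  · simp [blockQs, blockQsLeading, Composition.sum_of_le_one, qs_cons_right, qsLeading]
  · rw [blockQs, blockQsLeading, blockQsLeading, sum_blockSums_cons hm (qsLeading k · δ)]
    simp only [qs_cons_right, Finset.sum_add_distrib, add_assoc]

lemma blockQs_take_drop {α : List B} {i : ℕ} (hi : i < α.length) :
    blockQs k i (α.take i).reverse (α.drop i)
      = blockQsLeading k i (α.take i).reverse (α.drop i)
        + blockQsLeading k (i + 1) (α.take (i + 1)).reverse (α.drop (i + 1)) := by
  have reverse_take_succ : (α.take (i + 1)).reverse = α[i] :: (α.take i).reverse := by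
    rw [List.take_add_one, List.getElem?_eq_getElem hi, Option.toList_some, List.reverse_append]
    rfl
  rw [List.drop_eq_getElem_cons hi, blockQs_cons_right, reverse_take_succ]

end BlockQuasiShuffle

section Antipode

variable (k : Type*) [CommRing k] {B : Type*} [AddCommMonoid B]

lemma qsMul_single_one_right (F : List B →₀ k) (β : List B) :
    qsMul F (Finsupp.single β 1) = Finsupp.linearCombination k (fun w => qs k w β) F := by
  rw [Finsupp.linearCombination_apply, qsMul]
  refine Finsupp.sum_congr fun w _ => ?_
  rw [Finsupp.sum_single_index (by rw [mul_zero, zero_smul]), mul_one]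

lemma qsMul_qsAntipode_single (w β : List B) :
    qsMul (qsAntipode k w) (Finsupp.single β 1)
      = (-1 : k) ^ w.length • blockQs k w.length w.reverse β := by
  simp [qsMul_single_one_right, qsAntipode, blockQs, blockSums, map_sum]

end Antipode

lemma sum_range_neg_one_pow_smul_of_eq_add {R M : Type*} [Ring R] [AddCommGroup M] [Module R M]
    {T Y : ℕ → M} {n : ℕ} (h : ∀ i < n, T i = Y i + Y (i + 1)) :
    ∑ i ∈ Finset.range n, (-1 : R) ^ i • T i = Y 0 - (-1 : R) ^ n • Y n := by
  have telescope := Finset.sum_range_sub' (fun i => (-1 : R) ^ i • Y i) n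
  rw [pow_zero, one_smul] at telescope
  rw [← telescope]
  refine Finset.sum_congr rfl fun i hi => ?_
  rw [h i (Finset.mem_range.1 hi), pow_succ, mul_neg_one, neg_smul, smul_add, sub_neg_eq_add]

open scoped Classical in
/-- `S` is an antipode for the quasi-shuffle bialgebra of words:
`∑ S(α₍₁₎)·α₍₂₎ = ε(α)·1` for every word `α`, where the coproduct is
deconcatenation and `ε(α) = δ_{α,∅}`. -/
theorem stmt_10 (k : Type*) [CommRing k] {B : Type*} [AddCommMonoid B]
    (α : List B) :
    ∑ i ∈ Finset.range (α.length + 1),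
      qsMul (qsAntipode k (α.take i)) (Finsupp.single (α.drop i) 1)
    = if α = [] then Finsupp.single ([] : List B) (1 : k) else 0 := by
  have term_eq : ∀ i ∈ Finset.range (α.length + 1),
      qsMul (qsAntipode k (α.take i)) (Finsupp.single (α.drop i) 1)
        = (-1 : k) ^ i • blockQs k i (α.take i).reverse (α.drop i) := by
    intro i hi
    rw [qsMul_qsAntipode_single, List.length_take,
      min_eq_left (Nat.lt_succ_iff.1 (Finset.mem_range.1 hi))]
  rw [Finset.sum_congr rfl term_eq]
  obtain rfl | hα := eq_or_ne α []
  · simp [blockQs_zero]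
  set Y : ℕ → (List B →₀ k) := fun i => blockQsLeading k i (α.take i).reverse (α.drop i)
  have last_eq : blockQs k α.length (α.take α.length).reverse (α.drop α.length) = Y α.length := by
    simp only [Y, List.drop_length]
    exact blockQs_nil_right k (List.length_pos_iff.2 hα) _
  rw [Finset.sum_range_succ, last_eq,
    sum_range_neg_one_pow_smul_of_eq_add (T := fun i => blockQs k i (α.take i).reverse (α.drop i))
      (Y := Y) fun i hi => blockQs_take_drop k hi]
  simp [Y, blockQsLeading_zero, hα]
end

section
/- The map φ (as above) is a coalgebra homomorphism with respect to the deconcatenation coproducts: Δ∘φ = (φ⊗φ)∘Δ and ε_counit∘φ = ε_counit, where Δ(α) = Σ_{α=β·γ} β⊗γ. -/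
/-- The map `φ` on words over the monoid `Ñ∖{0}` (identified with `(ℕ,+)` via
the isomorphism `θ` sending `ε` to `0`, so that `ε`-entries are `0`-entries):
`φ(α) = (−1)^{ℓ_ε(α)} ᾱ` if `α` is empty or its first entry is a positive
integer, and `φ(α) = 0` if the first entry is `ε`; here `ℓ_ε(α)` is the number
of `ε`-entries and `ᾱ` deletes all `ε`-entries (yielding a word over `ℙ`). -/
noncomputable def phi (k : Type*) [CommRing k] (α : List ℕ) : List ℕ →₀ k :=
  if α.head? = some 0 then 0
  else (-1 : k) ^ (α.count 0) • Finsupp.single (α.filter (· ≠ 0)) 1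

/-- The deconcatenation coproduct of a word, with the tensor square of the free
module on words modeled as the free module on pairs of words. -/
noncomputable def deconcat (k : Type*) [CommRing k] {B : Type*} (α : List B) :
    (List B × List B) →₀ k :=
  ∑ i ∈ Finset.range (α.length + 1), Finsupp.single (α.take i, α.drop i) 1

/-- The tensor product `f ⊗ g` of two elements of the free module on words,
modeled in the free module on pairs of words. -/
noncomputable def fprod {k : Type*} [CommRing k] {B : Type*}
    (f g : List B →₀ k) : (List B × List B) →₀ k :=
  f.sum fun a c => g.sum fun b d => (c * d) • Finsupp.single (a, b) 1

/-! Write `ψ(α) = (−1)^{ℓ_ε(α)} ᾱ` (`signedBar`), so that `φ(α)` is `ψ(α)` unless `α`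
starts with `ε`. In `Σ_{α = βγ} φ(β) ⊗ φ(γ)` every `β` is a prefix of `α`, so `φ(β) = ψ(β)`
whenever `φ(α) ≠ 0`, while `φ(γ)` vanishes unless `γ` is empty or starts with a positive
entry. The surviving cuts of `α` are exactly the cuts of `ᾱ`, and the signs multiply to
`(−1)^{ℓ_ε(α)}`; inductively, a leading `ε` only flips the sign of every term and a
leading positive letter is prepended to the left factor of every term. -/

noncomputable def signedBar (k : Type*) [CommRing k] (α : List ℕ) : List ℕ →₀ k :=
  Finsupp.single (α.filter (· ≠ 0)) ((-1 : k) ^ α.count 0)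

section Fprod

variable {k : Type*} [CommRing k] {B : Type*}

noncomputable def consLeft (a : B) : ((List B × List B) →₀ k) →ₗ[k] (List B × List B) →₀ k :=
  Finsupp.lmapDomain k k (Prod.map (a :: ·) id)

lemma fprod_single_left (x : List B) (c : k) (g : List B →₀ k) :
    fprod (Finsupp.single x c) g = g.sum fun b d => (c * d) • Finsupp.single (x, b) 1 := by
  rw [fprod, Finsupp.sum_single_index]
  simp

lemma fprod_single_single (x y : List B) (c d : k) :
    fprod (Finsupp.single x c) (Finsupp.single y d) = (c * d) • Finsupp.single (x, y) 1 := by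
  rw [fprod_single_left, Finsupp.sum_single_index]
  simp

@[simp]
lemma fprod_zero_left (g : List B →₀ k) : fprod 0 g = 0 := by
  simp [fprod]

@[simp]
lemma fprod_zero_right (f : List B →₀ k) : fprod f 0 = 0 := by
  simp [fprod]

lemma fprod_neg_left (f g : List B →₀ k) : fprod (-f) g = -fprod f g := by
  rw [fprod, fprod, Finsupp.sum_neg_index (by simp), ← Finsupp.sum_neg]
  simp [Finsupp.sum, neg_mul, neg_smul]

@[simp]
lemma consLeft_single (a : B) (x y : List B) (c : k) :
    consLeft a (Finsupp.single (x, y) c) = Finsupp.single (a :: x, y) c := by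
  simp [consLeft]

lemma consLeft_fprod (a : B) (f g : List B →₀ k) :
    consLeft a (fprod f g) = fprod (Finsupp.mapDomain (a :: ·) f) g := by
  have hadd : ∀ (x : List B) (c₁ c₂ : k),
      (g.sum fun b d => ((c₁ + c₂) * d) • Finsupp.single (x, b) (1 : k)) =
        (g.sum fun b d => (c₁ * d) • Finsupp.single (x, b) (1 : k)) +
          g.sum fun b d => (c₂ * d) • Finsupp.single (x, b) (1 : k) := by
    intro x c₁ c₂
    simp only [add_mul, add_smul, Finsupp.sum_add]
  rw [fprod, fprod, Finsupp.sum_mapDomain_index (by simp) hadd]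
  simp only [map_finsuppSum, map_smul, consLeft_single]

lemma deconcat_cons (a : B) (α : List B) :
    deconcat k (a :: α) = Finsupp.single ([], a :: α) 1 + consLeft a (deconcat k α) := by
  rw [deconcat, Finset.sum_range_succ', add_comm, deconcat, map_sum]
  simp

end Fprod

section Phi

variable (k : Type*) [CommRing k]

lemma phi_eq_signedBar {α : List ℕ} (h : α.head? ≠ some 0) : phi k α = signedBar k α := by
  simp [phi, signedBar, h]

@[simp]
lemma phi_zero_cons (α : List ℕ) : phi k (0 :: α) = 0 := by
  simp [phi]

lemma signedBar_zero_cons (α : List ℕ) : signedBar k (0 :: α) = -signedBar k α := by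
  simp [signedBar, pow_succ]

lemma signedBar_cons_of_ne_zero {a : ℕ} (ha : a ≠ 0) (α : List ℕ) :
    signedBar k (a :: α) = Finsupp.mapDomain (a :: ·) (signedBar k α) := by
  simp [signedBar, ha]

lemma phi_cons_of_ne_zero {a : ℕ} (ha : a ≠ 0) (α : List ℕ) :
    phi k (a :: α) = Finsupp.mapDomain (a :: ·) (signedBar k α) := by
  rw [phi_eq_signedBar k (by simpa using ha), signedBar_cons_of_ne_zero k ha]

lemma sum_fprod_signedBar_phi (α : List ℕ) :
    ∑ i ∈ Finset.range (α.length + 1), fprod (signedBar k (α.take i)) (phi k (α.drop i)) =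
      (-1 : k) ^ α.count 0 • deconcat k (α.filter (· ≠ 0)) := by
  induction α with
  | nil => simp [phi, signedBar, fprod_single_single, deconcat]
  | cons a α ih =>
    rw [List.length_cons, Finset.sum_range_succ']
    simp only [List.take_succ_cons, List.drop_succ_cons, List.take_zero, List.drop_zero]
    by_cases ha : a = 0
    · subst ha
      simp only [phi_zero_cons, fprod_zero_right, add_zero, signedBar_zero_cons,
        fprod_neg_left, Finset.sum_neg_distrib, ih]
      simp [pow_succ]
    · have hhead : fprod (signedBar k []) (phi k (a :: α)) =
          (-1 : k) ^ α.count 0 • Finsupp.single ([], a :: α.filter (· ≠ 0)) 1 := by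
        simp [phi_cons_of_ne_zero k ha, signedBar, Finsupp.mapDomain_single, fprod_single_single]
      rw [List.count_cons_of_ne ha, List.filter_cons_of_pos (by simpa using ha),
        deconcat_cons, smul_add, ← hhead, ← map_smul, ← ih, map_sum, add_comm]
      simp only [signedBar_cons_of_ne_zero k ha, consLeft_fprod]

lemma phi_take_of_head? {α : List ℕ} (h : α.head? ≠ some 0) (i : ℕ) :
    phi k (α.take i) = signedBar k (α.take i) :=
  phi_eq_signedBar k (by rw [List.head?_take]; split_ifs <;> simp [h])

lemma fprod_phi_take_phi_drop_of_head? {α : List ℕ} (h : α.head? = some 0) (i : ℕ) :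
    fprod (phi k (α.take i)) (phi k (α.drop i)) = 0 := by
  obtain ⟨t, rfl⟩ : ∃ t, α = 0 :: t := List.head?_eq_some_iff.mp h
  cases i <;> simp

lemma phi_comul (α : List ℕ) :
    ((phi k α).sum fun γ c => c • deconcat k γ) =
      ∑ i ∈ Finset.range (α.length + 1), fprod (phi k (α.take i)) (phi k (α.drop i)) := by
  by_cases h : α.head? = some 0
  · obtain ⟨t, rfl⟩ : ∃ t, α = 0 :: t := List.head?_eq_some_iff.mp h
    simp only [phi_zero_cons, Finsupp.sum_zero_index]
    exact (Finset.sum_eq_zero fun i _ => fprod_phi_take_phi_drop_of_head? k h i).symm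
  · rw [Finset.sum_congr rfl fun i _ => by rw [phi_take_of_head? k h i],
      sum_fprod_signedBar_phi, phi_eq_signedBar k h, signedBar]
    exact Finsupp.sum_single_index (zero_smul k _)

lemma phi_counit (α : List ℕ) :
    ((phi k α).sum fun γ c => c * if γ = [] then 1 else 0) = if α = [] then 1 else 0 := by
  rcases α with _ | ⟨a, α⟩
  · simp [phi, Finsupp.sum_single_index, -mul_ite]
  · by_cases ha : a = 0 <;> simp [phi, ha]

end Phi

open scoped Classical in
/-- `φ` is a coalgebra homomorphism for the deconcatenation coproducts:
`Δ∘φ = (φ⊗φ)∘Δ` and `ε_counit∘φ = ε_counit`. -/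
theorem stmt_19 (k : Type*) [CommRing k] :
    (∀ α : List ℕ,
      ((phi k α).sum fun γ c => c • deconcat k γ) =
      ∑ i ∈ Finset.range (α.length + 1), fprod (phi k (α.take i)) (phi k (α.drop i))) ∧
    (∀ α : List ℕ,
      ((phi k α).sum fun γ c => c * (if γ = [] then (1 : k) else 0)) =
      (if α = [] then (1 : k) else 0)) :=
  ⟨phi_comul k, phi_counit k⟩
end
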